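/- For any nonempty subset Ṽ of the vertices of a cactus digraph G, there exists a unique minimum sub-cactus-or-vertex subgraph containing Ṽ: the intersection of all sub-cactus digraphs of G containing Ṽ is the smallest such subgraph (it is a sub-cactus digraph, or a single vertex in case Ṽ = {v} with v a connecting point). -/

import Mathlib

structure DirGraph (V : Type) where
  Adj : V → V → Prop
  loopless : ∀ v, ¬ Adj v v

namespace DirGraph

variable {V V' : Type}

/-- A walk is a nonempty list of vertices with consecutive arcs. -/
def IsWalk (G : DirGraph V) : List V → Prop
  | [] => False
  | [_] => True
  | a :: b :: l => G.Adj a b ∧ G.IsWalk (b :: l)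

def IsWalkFromTo (G : DirGraph V) (p : List V) (x y : V) : Prop :=
  G.IsWalk p ∧ p.head? = some x ∧ p.getLast? = some y

def StronglyConnected (G : DirGraph V) : Prop :=
  ∀ x y : V, ∃ p, G.IsWalkFromTo p x y

def IsSimplePath (G : DirGraph V) (p : List V) : Prop :=
  G.IsWalk p ∧ p.Nodup

def IsSimplePathFromTo (G : DirGraph V) (p : List V) (x y : V) : Prop :=
  G.IsSimplePath p ∧ p.head? = some x ∧ p.getLast? = some y

/-- The arcs of a walk given as a list of vertices. -/
def arcs (p : List V) : List (V × V) := p.zip p.tail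

/-- The preterminal (second-to-last) vertex of a path. -/
def preterminal (p : List V) : Option V := p.dropLast.getLast?

/-- A simple cycle: a closed walk whose vertices are distinct except for the
repeated endpoint. -/
def IsSimpleCycle (G : DirGraph V) (p : List V) : Prop :=
  G.IsWalk p ∧ 2 ≤ p.length ∧ p.head? = p.getLast? ∧ p.dropLast.Nodup

/-- Two cycles are equal as cycles when they have the same set of arcs. -/
def CycleEquiv (p q : List V) : Prop :=
  ∀ a : V × V, a ∈ arcs p ↔ a ∈ arcs q

/-- Each arc lies in exactly one simple cycle (up to arc-set equality). -/
def CactusArcCond (G : DirGraph V) : Prop :=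
  ∀ x y, G.Adj x y →
    (∃ p, G.IsSimpleCycle p ∧ (x, y) ∈ arcs p) ∧
    (∀ p q, G.IsSimpleCycle p → (x, y) ∈ arcs p →
      G.IsSimpleCycle q → (x, y) ∈ arcs q → CycleEquiv p q)

/-- A cactus digraph: strongly connected and each arc lies in exactly one
simple cycle. -/
def IsCactus (G : DirGraph V) : Prop :=
  G.StronglyConnected ∧ G.CactusArcCond

noncomputable def inDeg (G : DirGraph V) (v : V) : ℕ := Nat.card {u // G.Adj u v}
noncomputable def outDeg (G : DirGraph V) (v : V) : ℕ := Nat.card {u // G.Adj v u}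

/-- A connecting point: a vertex shared by two distinct simple cycles. -/
def IsConnectingPoint (G : DirGraph V) (v : V) : Prop :=
  ∃ p q, G.IsSimpleCycle p ∧ G.IsSimpleCycle q ∧ ¬ CycleEquiv p q ∧ v ∈ p ∧ v ∈ q

/-- An expansion of digraphs. -/
structure IsExpansion (G' : DirGraph V') (G : DirGraph V) (φ : V' → V) : Prop where
  map_adj : ∀ ⦃x y⦄, G'.Adj x y → G.Adj (φ x) (φ y)
  vert_surj : Function.Surjective φ
  arc_surj : ∀ ⦃x y⦄, G.Adj x y → ∃ x' y', G'.Adj x' y' ∧ φ x' = x ∧ φ y' = y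
  lift : ∀ ⦃x y⦄, G.Adj x y → ∀ y', φ y' = y → ∃! x', G'.Adj x' y' ∧ φ x' = x

/-- A doubly bidirectionally connected pair. -/
def Dbcp (G : DirGraph V) (p q : V) : Prop :=
  p ≠ q ∧
  (∃ P Q, G.IsSimplePathFromTo P p q ∧ G.IsSimplePathFromTo Q p q ∧
    preterminal P ≠ preterminal Q) ∧
  (∃ P Q, G.IsSimplePathFromTo P q p ∧ G.IsSimplePathFromTo Q q p ∧
    preterminal P ≠ preterminal Q)

/-- Subgraph of a digraph: a vertex subset together with a subrelation of arcs
supported on it. -/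
structure Subgraph (G : DirGraph V) where
  verts : Set V
  Adj : V → V → Prop
  adj_sub : ∀ ⦃x y⦄, Adj x y → G.Adj x y
  mem_left : ∀ ⦃x y⦄, Adj x y → x ∈ verts
  mem_right : ∀ ⦃x y⦄, Adj x y → y ∈ verts

def Subgraph.toDirGraph {G : DirGraph V} (H : Subgraph G) : DirGraph V :=
  ⟨H.Adj, fun v h => G.loopless v (H.adj_sub h)⟩

/-- A sub-cactus digraph: a nonempty subgraph that is strongly connected (on
its vertex set) and in which each arc lies in exactly one simple cycle. -/
def Subgraph.IsCactus {G : DirGraph V} (H : Subgraph G) : Prop :=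
  H.verts.Nonempty ∧
  (∀ x ∈ H.verts, ∀ y ∈ H.verts, ∃ p, H.toDirGraph.IsWalkFromTo p x y) ∧
  H.toDirGraph.CactusArcCond

def Subgraph.inter {G : DirGraph V} (H K : Subgraph G) : Subgraph G where
  verts := H.verts ∩ K.verts
  Adj x y := H.Adj x y ∧ K.Adj x y
  adj_sub := fun _ _ h => H.adj_sub h.1
  mem_left := fun _ _ h => ⟨H.mem_left h.1, K.mem_left h.2⟩
  mem_right := fun _ _ h => ⟨H.mem_right h.1, K.mem_right h.2⟩

def Subgraph.le {G : DirGraph V} (H K : Subgraph G) : Prop :=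
  H.verts ⊆ K.verts ∧ ∀ ⦃x y⦄, H.Adj x y → K.Adj x y

/-- The single-vertex subgraph. -/
def singleVert (G : DirGraph V) (v : V) : Subgraph G where
  verts := {v}
  Adj _ _ := False
  adj_sub := by intro _ _ h; exact h.elim
  mem_left := by intro _ _ h; exact h.elim
  mem_right := by intro _ _ h; exact h.elim

/-- The intersection of all sub-cactus digraphs of `G` containing `W`. -/
def CsubOf (G : DirGraph V) (W : Set V) : Subgraph G where
  verts := {x | ∀ H : Subgraph G, H.IsCactus → W ⊆ H.verts → x ∈ H.verts}
  Adj x y := G.Adj x y ∧ ∀ H : Subgraph G, H.IsCactus → W ⊆ H.verts → H.Adj x y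
  adj_sub := fun _ _ h => h.1
  mem_left := fun _ _ h H hH hW => H.mem_left (h.2 H hH hW)
  mem_right := fun _ _ h H hH hW => H.mem_right (h.2 H hH hW)

open Classical in
/-- `C G r v`: the minimum sub-cactus digraph containing `{r, v}` (and the
single vertex `{r}` when `v = r`). -/
noncomputable def C (G : DirGraph V) (r v : V) : Subgraph G :=
  if v = r then singleVert G r else CsubOf G {r, v}

/-- The preorder on vertices of the rooted cactus digraph `(G, r)`:
`v ≼ w ↔ C(v) ⊆ C(w)`. -/
def pre (G : DirGraph V) (r v w : V) : Prop :=
  Subgraph.le (C G r v) (C G r w)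

end DirGraph

/-!
Simple paths in a cactus digraph are unique. Fix a simple path `w e … x` from `w` back to
`x ≠ w`. Closing any simple path from `x` to `w` with it gives a simple cycle through the arc
`(w, e)` containing the last arc `(c, w)` of the path; all these cycles coincide, and a simple
cycle enters `w` by a single arc, so `c` does not depend on the path, and induction on the length
finishes. Hence every sub-cactus containing `x` and `y` contains the simple `x`–`y` path of `G`,
and every sub-cactus containing an arc contains the cycle of `G` through it. So the intersection
of the sub-cacti containing `W` is strongly connected on its vertex set and inherits the cycle
condition from `G`; as `Subgraph.IsCactus` admits a single vertex without arcs, it is always a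
sub-cactus in that sense.
-/

namespace DirGraph

variable {V : Type} {G G' : DirGraph V} {p q D : List V} {u v w x y c c' : V} {W : Set V}

lemma isWalk_iff_isChain : G.IsWalk p ↔ p ≠ [] ∧ p.IsChain G.Adj := by
  induction p using List.twoStepInduction with
  | nil => simp [IsWalk]
  | singleton a => simp [IsWalk]
  | cons_cons a b l _ ih => simp [IsWalk, ih]

lemma IsWalk.ne_nil (h : G.IsWalk p) : p ≠ [] := (isWalk_iff_isChain.1 h).1

lemma IsWalk.isChain (h : G.IsWalk p) : p.IsChain G.Adj := (isWalk_iff_isChain.1 h).2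

lemma mem_arcs_iff : (u, v) ∈ arcs p ↔ ∃ l₁ l₂, p = l₁ ++ u :: v :: l₂ := by
  induction p using List.twoStepInduction with
  | nil => simp [arcs]
  | singleton a =>
    simp only [arcs, List.tail_cons, List.zip_nil_right, List.not_mem_nil, false_iff]
    rintro ⟨l₁, l₂, h⟩
    have := congrArg List.length h
    simp at this
    omega
  | cons_cons a b l _ ih =>
    rw [show arcs (a :: b :: l) = (a, b) :: arcs (b :: l) from rfl, List.mem_cons, ih]
    constructor
    · rintro (h | ⟨l₁, l₂, h⟩)
      · obtain ⟨rfl, rfl⟩ := Prod.mk.inj h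
        exact ⟨[], l, rfl⟩
      · exact ⟨a :: l₁, l₂, by rw [h, List.cons_append]⟩
    · rintro ⟨_ | ⟨c, l₁⟩, l₂, h⟩
      · simp_all
      · exact Or.inr ⟨l₁, l₂, (List.cons_eq_cons.1 h).2⟩

lemma IsWalk.adj_of_mem_arcs (h : G.IsWalk p) (huv : (u, v) ∈ arcs p) : G.Adj u v := by
  obtain ⟨l₁, l₂, rfl⟩ := mem_arcs_iff.1 huv
  exact List.isChain_iff_forall_rel_of_append_cons_cons.1 h.isChain rfl

lemma isWalk_of_forall_mem_arcs (hp : p ≠ []) (h : ∀ ⦃u v⦄, (u, v) ∈ arcs p → G.Adj u v) :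
    G.IsWalk p :=
  isWalk_iff_isChain.2 ⟨hp, List.isChain_iff_forall_rel_of_append_cons_cons.2
    fun _ _ l₁ l₂ hl => h (mem_arcs_iff.2 ⟨l₁, l₂, hl⟩)⟩

lemma IsWalk.mono (hle : ∀ ⦃u v⦄, G.Adj u v → G'.Adj u v) (h : G.IsWalk p) : G'.IsWalk p :=
  isWalk_of_forall_mem_arcs h.ne_nil fun _ _ huv => hle (h.adj_of_mem_arcs huv)

lemma IsSimplePathFromTo.mono (hle : ∀ ⦃u v⦄, G.Adj u v → G'.Adj u v)
    (h : G.IsSimplePathFromTo p x y) : G'.IsSimplePathFromTo p x y :=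
  ⟨⟨h.1.1.mono hle, h.1.2⟩, h.2⟩

lemma IsSimpleCycle.mono (hle : ∀ ⦃u v⦄, G.Adj u v → G'.Adj u v) (h : G.IsSimpleCycle p) :
    G'.IsSimpleCycle p :=
  ⟨h.1.mono hle, h.2⟩

lemma IsWalkFromTo.exists_isSimplePathFromTo (h : G.IsWalkFromTo p x y) :
    ∃ q, G.IsSimplePathFromTo q x y := by
  obtain ⟨q, hq, hmin⟩ :=
    (measure List.length).wf.has_min {q | G.IsWalkFromTo q x y} ⟨p, h⟩
  refine ⟨q, ⟨hq.1, List.nodup_iff_sublist.2 fun a haa => ?_⟩, hq.2⟩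
  obtain ⟨r₁, r₂, rfl, ha₁, ha₂⟩ := List.cons_sublist_iff.1 haa
  obtain ⟨l₁, l₂, rfl⟩ := List.append_of_mem ha₁
  obtain ⟨l₂', l₃, rfl⟩ := List.append_of_mem (List.singleton_sublist.1 ha₂)
  -- cutting out the closed subwalk between the two visits of `a` leaves a shorter walk
  have hchain := hq.1.isChain
  refine hmin (l₁ ++ a :: l₃) ⟨isWalk_iff_isChain.2 ⟨by simp, ?_⟩, ?_, ?_⟩
    (show List.length _ < List.length _ by simp; omega)
  · have hpre : (l₁ ++ [a]).IsChain G.Adj := hchain.prefix ⟨l₂ ++ l₂' ++ a :: l₃, by simp⟩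
    have hsuf : ([a] ++ l₃).IsChain G.Adj := hchain.suffix ⟨l₁ ++ a :: l₂ ++ l₂', by simp⟩
    simpa using hpre.append_overlap hsuf (List.cons_ne_nil _ _)
  · rw [← hq.2.1]; cases l₁ <;> simp
  · rw [← hq.2.2,
      show l₁ ++ a :: l₂ ++ (l₂' ++ a :: l₃) = (l₁ ++ a :: l₂ ++ l₂') ++ a :: l₃ by simp,
      List.getLast?_append_of_ne_nil _ (List.cons_ne_nil _ _),
      List.getLast?_append_of_ne_nil _ (List.cons_ne_nil _ _)]

lemma IsSimpleCycle.nodup_tail (h : G.IsSimpleCycle D) : D.tail.Nodup := by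
  obtain ⟨-, hlen, hends, hnd⟩ := h
  obtain ⟨a, t, rfl⟩ := List.exists_cons_of_length_pos (show 0 < D.length by omega)
  have ht : t ≠ [] := List.ne_nil_of_length_pos (by simp at hlen; omega)
  rw [List.head?_cons, List.getLast?_cons, List.getLast?_eq_some_getLast ht,
    Option.getD_some] at hends
  rw [List.dropLast_cons_of_ne_nil ht, List.nodup_cons] at hnd
  rw [List.tail_cons, ← List.dropLast_append_getLast ht, ← Option.some_inj.1 hends]
  exact (List.perm_append_singleton _ _).nodup_iff.2 (List.nodup_cons.2 hnd)

lemma IsSimpleCycle.eq_of_mem_arcs (h : G.IsSimpleCycle D) (hc : (c, w) ∈ arcs D)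
    (hc' : (c', w) ∈ arcs D) : c = c' := by
  obtain ⟨i, hi, hic⟩ := List.mem_iff_getElem.1 hc
  obtain ⟨j, hj, hjc⟩ := List.mem_iff_getElem.1 hc'
  simp only [arcs, List.getElem_zip, Prod.mk.injEq] at hic hjc
  obtain rfl : i = j := (h.nodup_tail.getElem_inj_iff).1 (hic.2.trans hjc.2.symm)
  exact hic.1.symm.trans hjc.1

lemma exists_isSimpleCycle_of_isSimplePath {P R : List V} {e : V}
    (hP : G.IsSimplePath (P ++ [c, w])) (hR : G.IsSimplePath (w :: e :: R))
    (hmeet : ∃ v ∈ e :: R, v ∈ P ++ [c]) :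
    ∃ D, G.IsSimpleCycle D ∧ (c, w) ∈ arcs D ∧ (w, e) ∈ arcs D := by
  classical
  -- the cycle is `v … c w e … v`, where `v` is the first vertex of `e :: R` on `P ++ [c]`
  obtain ⟨u, hu, huP⟩ := hmeet
  obtain ⟨v, hv⟩ : ∃ v, (e :: R).find? (fun u => decide (u ∈ P ++ [c])) = some v :=
    Option.isSome_iff_exists.1 (List.find?_isSome.2 ⟨u, hu, decide_eq_true huP⟩)
  obtain ⟨hvP, R₁, R₂, hR₁₂, hR₁⟩ := List.find?_eq_some_iff_append.1 hv
  simp only [decide_eq_true_eq, Bool.not_eq_true', decide_eq_false_iff_not] at hvP hR₁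
  obtain ⟨A, B, hAB⟩ := List.append_of_mem hvP
  obtain ⟨B', hB'⟩ : ∃ B', v :: B = B' ++ [c] := by
    obtain ⟨B', c₀, hB'⟩ := (List.eq_nil_or_concat (v :: B)).resolve_left (List.cons_ne_nil _ _)
    rw [List.concat_eq_append] at hB'
    rw [hB', ← List.append_assoc] at hAB
    obtain ⟨-, hc⟩ := List.append_inj' hAB rfl
    exact ⟨B', by rw [hB', hc]⟩
  obtain ⟨T, hT⟩ : ∃ T, R₁ ++ [v] = e :: T := by
    cases R₁ with
    | nil => exact ⟨[], by rw [(List.cons_eq_cons.1 hR₁₂).1]; rfl⟩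
    | cons r R₁ => exact ⟨R₁ ++ [v], by rw [(List.cons_eq_cons.1 hR₁₂).1]; rfl⟩
  have hPeq : P ++ [c, w] = A ++ (v :: B ++ [w]) := by
    rw [show P ++ [c, w] = P ++ [c] ++ [w] by simp, hAB, List.append_assoc]
  have hReq : w :: e :: R = (w :: R₁ ++ [v]) ++ R₂ := by rw [hR₁₂]; simp
  have hPchain := hP.1.isChain
  have hRchain := hR.1.isChain
  have hPnd := hP.2
  have hRnd := hR.2
  rw [hPeq] at hPchain hPnd
  rw [hReq] at hRchain hRnd
  refine ⟨(v :: B ++ w :: R₁) ++ [v],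
    ⟨isWalk_iff_isChain.2 ⟨by simp, ?_⟩, by simp; omega, ?_, ?_⟩,
    mem_arcs_iff.2 ⟨B', R₁ ++ [v], ?_⟩, mem_arcs_iff.2 ⟨v :: B, T, ?_⟩⟩
  · simpa using (hPchain.suffix ⟨A, rfl⟩).append_overlap (l₂ := [w])
      (hRchain.prefix ⟨R₂, rfl⟩) (List.cons_ne_nil _ _)
  · rw [List.getLast?_concat]; rfl
  · have hBw : (v :: B ++ [w]).Nodup := hPnd.sublist (List.sublist_append_right _ _)
    have hwR : (w :: R₁).Nodup :=
      hRnd.sublist ((List.sublist_append_left _ _).trans (List.sublist_append_left _ _))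
    rw [List.dropLast_concat]
    refine List.nodup_append.2 ⟨hBw.sublist (List.sublist_append_left _ _), hwR, ?_⟩
    rintro a ha b (_ | ⟨_, hb⟩) rfl
    · exact (List.nodup_append.1 hBw).2.2 a ha a (by simp) rfl
    · exact hR₁ a hb (hAB ▸ List.mem_append_right A ha)
  · rw [List.append_assoc, hB']; simp
  · rw [← hT]; simp

lemma IsSimplePathFromTo.eq_singleton (h : G.IsSimplePathFromTo p x x) : p = [x] := by
  obtain ⟨⟨-, hnd⟩, hx, hx'⟩ := h
  obtain ⟨_ | ⟨b, t⟩, rfl⟩ := List.head?_eq_some_iff.1 hx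
  · rfl
  · rw [List.getLast?_cons_cons] at hx'
    exact absurd (List.mem_of_getLast? hx') (List.nodup_cons.1 hnd).1

lemma IsSimplePathFromTo.exists_eq_append (h : G.IsSimplePathFromTo p x y) (hxy : x ≠ y) :
    ∃ p' c, p = p' ++ [c, y] ∧ G.IsSimplePathFromTo (p' ++ [c]) x c := by
  obtain ⟨⟨hw, hnd⟩, hx, hy⟩ := h
  obtain ⟨l, rfl⟩ := List.getLast?_eq_some_iff.1 hy
  have hl : l ≠ [] := by
    rintro rfl
    exact hxy (Option.some_inj.1 hx).symm
  rw [← List.dropLast_append_getLast hl] at hw hnd hx ⊢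
  refine ⟨l.dropLast, l.getLast hl, by simp, ⟨⟨?_, hnd.sublist (List.sublist_append_left _ _)⟩,
    ?_, by simp⟩⟩
  · exact isWalk_iff_isChain.2 ⟨by simp, hw.isChain.prefix (List.prefix_append _ _)⟩
  · rwa [List.head?_append_of_ne_nil _ (by simp)] at hx

lemma IsCactus.eq_of_isSimplePath_append (hG : G.IsCactus) {P Q : List V}
    (hP : G.IsSimplePath (P ++ [c, w])) (hQ : G.IsSimplePath (Q ++ [c', w]))
    (hPQ : (P ++ [c]).head? = (Q ++ [c']).head?) : c = c' := by
  obtain ⟨x, hx⟩ : ∃ x, (P ++ [c]).head? = some x := Option.isSome_iff_exists.1 (by simp)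
  have hxP : x ∈ P ++ [c] := List.mem_of_mem_head? hx
  have hxQ : x ∈ Q ++ [c'] := List.mem_of_mem_head? (hPQ ▸ hx)
  have hxw : x ≠ w := by
    rintro rfl
    have hnd := hP.2
    rw [show P ++ [c, x] = P ++ [c] ++ [x] by simp, List.nodup_append] at hnd
    exact hnd.2.2 x hxP x (by simp) rfl
  obtain ⟨R₀, hR₀⟩ := hG.1 w x
  obtain ⟨R, hR, hRw, hRx⟩ := hR₀.exists_isSimplePathFromTo
  obtain ⟨_ | ⟨e, R⟩, rfl⟩ := List.head?_eq_some_iff.1 hRw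
  · exact absurd (Option.some_inj.1 hRx).symm hxw
  rw [List.getLast?_cons_cons] at hRx
  have hxR := List.mem_of_getLast? hRx
  obtain ⟨D₁, hD₁, hcD₁, heD₁⟩ := exists_isSimpleCycle_of_isSimplePath hP hR ⟨x, hxR, hxP⟩
  obtain ⟨D₂, hD₂, hcD₂, heD₂⟩ := exists_isSimpleCycle_of_isSimplePath hQ hR ⟨x, hxR, hxQ⟩
  have hD : CycleEquiv D₂ D₁ := (hG.2 w e hR.1.1).2 D₂ D₁ hD₂ heD₂ hD₁ heD₁
  exact hD₁.eq_of_mem_arcs hcD₁ ((hD _).1 hcD₂)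

theorem IsCactus.isSimplePathFromTo_unique (hG : G.IsCactus)
    (hp : G.IsSimplePathFromTo p x y) (hq : G.IsSimplePathFromTo q x y) : p = q := by
  induction p using List.reverseRecOn generalizing q y with
  | nil => exact (hp.1.1.ne_nil rfl).elim
  | append_singleton p y' ih =>
    by_cases hxy : x = y
    · subst hxy
      rw [hp.eq_singleton, hq.eq_singleton]
    obtain ⟨P, c, hP, hPc⟩ := hp.exists_eq_append hxy
    obtain ⟨Q, c', rfl, hQc⟩ := hq.exists_eq_append hxy
    obtain rfl : c = c' := hG.eq_of_isSimplePath_append (hP ▸ hp.1) hq.1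
      (hPc.2.1.trans hQc.2.1.symm)
    obtain ⟨rfl, hy⟩ :=
      List.append_inj' (hP.trans (show P ++ [c, y] = P ++ [c] ++ [y] by simp)) rfl
    rw [ih hPc hQc, hy, List.append_assoc]
    rfl

lemma subset_csubOf_verts : W ⊆ (CsubOf G W).verts :=
  fun _ hx _ _ hWH => hWH hx

lemma csubOf_le {H : Subgraph G} (hH : H.IsCactus) (hWH : W ⊆ H.verts) : (CsubOf G W).le H :=
  ⟨fun _ hx => hx H hH hWH, fun _ _ h => h.2 H hH hWH⟩

lemma IsCactus.exists_walkFromTo_csubOf (hG : G.IsCactus) {x y : V}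
    (hx : x ∈ (CsubOf G W).verts) (hy : y ∈ (CsubOf G W).verts) :
    ∃ p, (CsubOf G W).toDirGraph.IsWalkFromTo p x y := by
  obtain ⟨p₀, hp₀⟩ := hG.1 x y
  obtain ⟨p, hp⟩ := hp₀.exists_isSimplePathFromTo
  refine ⟨p, isWalk_of_forall_mem_arcs hp.1.1.ne_nil fun u v huv => ⟨hp.1.1.adj_of_mem_arcs huv,
    fun H hH hWH => ?_⟩, hp.2⟩
  obtain ⟨q₀, hq₀⟩ := hH.2.1 x (hx H hH hWH) y (hy H hH hWH)
  obtain ⟨q, hq⟩ := hq₀.exists_isSimplePathFromTo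
  rw [hG.isSimplePathFromTo_unique hp (hq.mono H.adj_sub)] at huv
  exact hq.1.1.adj_of_mem_arcs huv

lemma IsCactus.cactusArcCond_csubOf (hG : G.IsCactus) : (CsubOf G W).toDirGraph.CactusArcCond := by
  intro u v huv
  obtain ⟨⟨p, hp, hpuv⟩, huniq⟩ := hG.2 u v huv.1
  refine ⟨⟨p, ⟨isWalk_of_forall_mem_arcs hp.1.ne_nil fun a b hab =>
    ⟨hp.1.adj_of_mem_arcs hab, fun H hH hWH => ?_⟩, hp.2⟩, hpuv⟩,
    fun q r hq hquv hr hruv => huniq q r (hq.mono (CsubOf G W).adj_sub) hquv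
      (hr.mono (CsubOf G W).adj_sub) hruv⟩
  obtain ⟨q, hq, hquv⟩ := (hH.2.2 u v (huv.2 H hH hWH)).1
  exact hq.1.adj_of_mem_arcs ((huniq p q hp hpuv (hq.mono H.adj_sub) hquv (a, b)).1 hab)

end DirGraph

open DirGraph in
/-- For a nonempty vertex set `W` of a cactus digraph, the intersection of all
sub-cactus digraphs containing `W` is the unique minimum subgraph containing
`W`; it is itself a sub-cactus digraph, or a single vertex in case `W = {v}`
with `v` a connecting point. -/
theorem minimum_subcactus_of_set {V : Type} (G : DirGraph V) (hG : G.IsCactus)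
    (W : Set V) (hW : W.Nonempty) :
    W ⊆ (CsubOf G W).verts ∧
    (∀ H : Subgraph G, H.IsCactus → W ⊆ H.verts → (CsubOf G W).le H) ∧
    ((CsubOf G W).IsCactus ∨
      ∃ v, W = {v} ∧ G.IsConnectingPoint v ∧
        (CsubOf G W).verts = {v} ∧ ∀ x y, ¬ (CsubOf G W).Adj x y) :=
  ⟨subset_csubOf_verts, fun _ hH hWH => csubOf_le hH hWH,
    Or.inl ⟨hW.mono subset_csubOf_verts, fun _ hx _ hy => hG.exists_walkFromTo_csubOf hx hy,
      hG.cactusArcCond_csubOf⟩⟩
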